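/- arXiv:1709.05062 — 3 statements merged into one kernel-verified Lean document; each statement's English description precedes it below -/
import Mathlib

section
/- In the setting of the previous statement (ε mean-zero with positive-definite covariance Σ, U of full column rank d, V positive definite, D = UᵀV⁻¹U, H = UᵀV⁻¹ΣV⁻¹U, and θ̂ − θ⁰ = D⁻¹UᵀV⁻¹ε), let τ = λ_min(D H⁻¹ D) > 0 denote the smallest eigenvalue of the (symmetric positive definite) information matrix D H⁻¹ D. Then for every δ > 0, P( ‖θ̂ − θ⁰‖₂ > δ·√(d/τ) ) ≤ 1/δ². In particular, the estimation error is controlled by λ_min(D H⁻¹ D). -/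
/-!
Write `x = θ̂ − θ⁰ = D⁻¹Aε` with `A = UᵀV⁻¹`, so that `AΣAᵀ = H`. The quadratic form
`q = xᵀ(DH⁻¹D)x = (Aε)ᵀH⁻¹(Aε)` is the squared Mahalanobis norm of `Aε` with respect to its own
covariance, hence `E q = tr(H⁻¹H) = d`, and Markov's inequality gives `P(q ≥ δ²d) ≤ 1/δ²`.
On the other hand `q ≥ λ_min(DH⁻¹D)‖x‖²`, so `‖x‖ > δ√(d/τ)` forces `q > δ²d`.
-/

open Matrix MeasureTheory

open scoped MatrixOrder in
theorem Matrix.IsHermitian.iInf_eigenvalues_mul_dotProduct_self_le {n : Type*} [Fintype n]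
    [DecidableEq n] {N : Matrix n n ℝ} (hN : N.IsHermitian) (x : n → ℝ) :
    (⨅ i, hN.eigenvalues i) * (x ⬝ᵥ x) ≤ x ⬝ᵥ (N *ᵥ x) := by
  have hle : algebraMap ℝ _ (⨅ i, hN.eigenvalues i) ≤ N := by
    refine (algebraMap_le_iff_le_spectrum hN.isSelfAdjoint).2 ?_
    rw [hN.spectrum_real_eq_range_eigenvalues]
    rintro _ ⟨i, rfl⟩
    exact ciInf_le (Finite.bddBelow_range _) i
  have := (Matrix.le_iff.1 hle).dotProduct_mulVec_nonneg x
  rwa [star_trivial, sub_mulVec, dotProduct_sub, Algebra.algebraMap_eq_smul_one, smul_mulVec,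
    one_mulVec, dotProduct_smul, smul_eq_mul, sub_nonneg] at this

theorem Matrix.IsHermitian.sq_mul_lt_dotProduct_mulVec {n : Type*} [Fintype n] [DecidableEq n]
    {N : Matrix n n ℝ} (hN : N.IsHermitian) (hτ : 0 < ⨅ i, hN.eigenvalues i) {δ c : ℝ}
    (hδ : 0 ≤ δ) (hc : 0 ≤ c) {x : n → ℝ}
    (h : δ * √(c / ⨅ i, hN.eigenvalues i) < √(∑ k, x k ^ 2)) :
    δ ^ 2 * c < x ⬝ᵥ (N *ᵥ x) := by
  set τ := ⨅ i, hN.eigenvalues i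
  have hxx : x ⬝ᵥ x = ∑ k, x k ^ 2 := by simp only [dotProduct, sq]
  have hsq : δ ^ 2 * (c / τ) < x ⬝ᵥ x := by
    have := (Real.lt_sqrt (by positivity)).1 h
    rwa [mul_pow, Real.sq_sqrt (by positivity), ← hxx] at this
  calc δ ^ 2 * c = τ * (δ ^ 2 * (c / τ)) := by field_simp
    _ < τ * (x ⬝ᵥ x) := by gcongr
    _ ≤ x ⬝ᵥ (N *ᵥ x) := hN.iInf_eigenvalues_mul_dotProduct_self_le x

section Covariance

variable {Ω m : Type*} [MeasurableSpace Ω] {μ : Measure Ω} [Fintype m] [DecidableEq m]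
  {ε : Ω → m → ℝ} {Sig : Matrix m m ℝ}

theorem Matrix.dotProduct_mulVec_eq_sum_single (Q : Matrix m m ℝ) (v : m → ℝ) :
    v ⬝ᵥ (Q *ᵥ v) = ∑ i, (Pi.single i 1 ⬝ᵥ v) * (Q i ⬝ᵥ v) := by
  simp only [single_one_dotProduct]
  rfl

theorem integrable_dotProduct_mulVec_self
    (hε2 : ∀ a b : m → ℝ, Integrable (fun ω => (a ⬝ᵥ ε ω) * (b ⬝ᵥ ε ω)) μ)
    (Q : Matrix m m ℝ) : Integrable (fun ω => ε ω ⬝ᵥ (Q *ᵥ ε ω)) μ := by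
  simp only [dotProduct_mulVec_eq_sum_single]
  exact integrable_finsetSum _ fun i _ => hε2 _ _

theorem integral_dotProduct_mulVec_self
    (hε2 : ∀ a b : m → ℝ, Integrable (fun ω => (a ⬝ᵥ ε ω) * (b ⬝ᵥ ε ω)) μ)
    (hcov : ∀ a b : m → ℝ, ∫ ω, (a ⬝ᵥ ε ω) * (b ⬝ᵥ ε ω) ∂μ = a ⬝ᵥ (Sig *ᵥ b))
    (Q : Matrix m m ℝ) : ∫ ω, ε ω ⬝ᵥ (Q *ᵥ ε ω) ∂μ = trace (Qᵀ * Sig) := by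
  simp only [dotProduct_mulVec_eq_sum_single]
  rw [integral_finsetSum Finset.univ fun i _ => hε2 (Pi.single i 1) (Q i),
    Finset.sum_congr rfl fun i _ =>
      (hcov (Pi.single i 1) (Q i)).trans (single_one_dotProduct _ _)]
  simp only [trace, diag, mul_apply, transpose_apply, mulVec, dotProduct]
  rw [Finset.sum_comm]
  simp only [mul_comm]

theorem integral_dotProduct_mulVec_transpose_mul_inv_mul {k : Type*} [Fintype k] [DecidableEq k]
    (hε2 : ∀ a b : m → ℝ, Integrable (fun ω => (a ⬝ᵥ ε ω) * (b ⬝ᵥ ε ω)) μ)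
    (hcov : ∀ a b : m → ℝ, ∫ ω, (a ⬝ᵥ ε ω) * (b ⬝ᵥ ε ω) ∂μ = a ⬝ᵥ (Sig *ᵥ b))
    (A : Matrix k m ℝ) (hH : (A * Sig * Aᵀ).PosDef) :
    ∫ ω, ε ω ⬝ᵥ ((Aᵀ * (A * Sig * Aᵀ)⁻¹ * A) *ᵥ ε ω) ∂μ = Fintype.card k := by
  set H := A * Sig * Aᵀ
  have hsymm : H⁻¹ᵀ = H⁻¹ := (isHermitian_iff_isSymm.1 hH.isHermitian).inv
  rw [integral_dotProduct_mulVec_self hε2 hcov, transpose_mul, transpose_mul, transpose_transpose,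
    hsymm, Matrix.mul_assoc, trace_mul_comm,
    show H⁻¹ * A * Sig * Aᵀ = H⁻¹ * H by simp only [H, Matrix.mul_assoc],
    nonsing_inv_mul _ ((isUnit_iff_isUnit_det _).1 hH.isUnit), trace_one]

end Covariance

theorem meas_ge_le_ofReal_integral_div {Ω : Type*} [MeasurableSpace Ω] {μ : Measure Ω}
    [IsFiniteMeasure μ] {f : Ω → ℝ} (hf_nonneg : 0 ≤ᵐ[μ] f) (hf : Integrable f μ) {c : ℝ}
    (hc : 0 < c) : μ {ω | c ≤ f ω} ≤ ENNReal.ofReal ((∫ ω, f ω ∂μ) / c) := by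
  rw [ENNReal.le_ofReal_iff_toReal_le (measure_ne_top μ _)
    (div_nonneg (integral_nonneg_of_ae hf_nonneg) hc.le)]
  exact (le_div_iff₀' hc).2 (mul_meas_ge_le_integral_of_nonneg hf_nonneg hf c)

theorem Matrix.dotProduct_transpose_mul_mul_mulVec {k m : Type*} [Fintype k] [Fintype m]
    (A : Matrix k m ℝ) (B : Matrix k k ℝ) (v : m → ℝ) :
    v ⬝ᵥ ((Aᵀ * B * A) *ᵥ v) = (A *ᵥ v) ⬝ᵥ (B *ᵥ (A *ᵥ v)) := by
  rw [← mulVec_mulVec, ← mulVec_mulVec, dotProduct_mulVec, vecMul_transpose]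

theorem Matrix.PosDef.dotProduct_mulVec_mul_mul_inv {n : Type*} [Fintype n] [DecidableEq n]
    {D : Matrix n n ℝ} (hD : D.PosDef) (B : Matrix n n ℝ) (y : n → ℝ) :
    (D⁻¹ *ᵥ y) ⬝ᵥ ((D * B * D) *ᵥ (D⁻¹ *ᵥ y)) = y ⬝ᵥ (B *ᵥ y) := by
  have hDx : D *ᵥ (D⁻¹ *ᵥ y) = y := by
    rw [mulVec_mulVec, mul_nonsing_inv _ ((isUnit_iff_isUnit_det _).1 hD.isUnit), one_mulVec]
  rw [← mulVec_mulVec, ← mulVec_mulVec, hDx, dotProduct_mulVec, ← mulVec_transpose,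
    (isHermitian_iff_isSymm.1 hD.isHermitian).eq, hDx]

theorem mdsp_lemma1_consistency_general
    {Ω : Type*} [MeasurableSpace Ω] (μ : Measure Ω) [IsProbabilityMeasure μ]
    (M d : ℕ) [NeZero d] (ε : Ω → Fin M → ℝ)
    (Sig : Matrix (Fin M) (Fin M) ℝ)
    (hε2 : ∀ a b : Fin M → ℝ, Integrable (fun ω => (a ⬝ᵥ ε ω) * (b ⬝ᵥ ε ω)) μ)
    (hcov : ∀ a b : Fin M → ℝ, ∫ ω, (a ⬝ᵥ ε ω) * (b ⬝ᵥ ε ω) ∂μ = a ⬝ᵥ (Sig *ᵥ b))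
    (U : Matrix (Fin M) (Fin d) ℝ)
    (V : Matrix (Fin M) (Fin M) ℝ) (hV : V.PosDef)
    (hD : (Uᵀ * V⁻¹ * U).PosDef)
    (hH : (Uᵀ * V⁻¹ * Sig * V⁻¹ * U).PosDef)
    (hSym : ((Uᵀ * V⁻¹ * U) * (Uᵀ * V⁻¹ * Sig * V⁻¹ * U)⁻¹ * (Uᵀ * V⁻¹ * U)).IsHermitian)
    (hτ : 0 < ⨅ i, hSym.eigenvalues i)
    (δ : ℝ) (hδ : 0 < δ) :
    μ {ω | δ * Real.sqrt ((d : ℝ) / (⨅ i, hSym.eigenvalues i)) <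
        Real.sqrt (∑ k, (((Uᵀ * V⁻¹ * U)⁻¹ *ᵥ (Uᵀ *ᵥ (V⁻¹ *ᵥ ε ω))) k) ^ 2)} ≤
      ENNReal.ofReal (1 / δ ^ 2) := by
  set A := Uᵀ * V⁻¹
  set H := Uᵀ * V⁻¹ * Sig * V⁻¹ * U
  have hAH : A * Sig * Aᵀ = H := by
    rw [transpose_mul, transpose_transpose, transpose_nonsing_inv,
      (isHermitian_iff_isSymm.1 hV.isHermitian).eq]
    simp only [A, H, Matrix.mul_assoc]
  set q := fun ω => ε ω ⬝ᵥ ((Aᵀ * H⁻¹ * A) *ᵥ ε ω)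
  have hq : ∀ ω, q ω = (A *ᵥ ε ω) ⬝ᵥ (H⁻¹ *ᵥ (A *ᵥ ε ω)) := fun ω =>
    dotProduct_transpose_mul_mul_mulVec A H⁻¹ (ε ω)
  have hq_nonneg : ∀ ω, 0 ≤ q ω := fun ω => by
    simpa [hq] using hH.inv.posSemidef.dotProduct_mulVec_nonneg (A *ᵥ ε ω)
  have hq_int : ∫ ω, q ω ∂μ = d := by
    simpa [hAH] using integral_dotProduct_mulVec_transpose_mul_inv_mul hε2 hcov A (hAH ▸ hH)
  have hd : (0 : ℝ) < d := by exact_mod_cast Nat.pos_of_neZero d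
  have hevent : ∀ ω, δ * √(d / ⨅ i, hSym.eigenvalues i) <
      √(∑ k, (((Uᵀ * V⁻¹ * U)⁻¹ *ᵥ (Uᵀ *ᵥ (V⁻¹ *ᵥ ε ω))) k) ^ 2) → δ ^ 2 * d ≤ q ω := by
    intro ω h
    rw [mulVec_mulVec (ε ω) Uᵀ V⁻¹] at h
    have := hSym.sq_mul_lt_dotProduct_mulVec hτ hδ.le hd.le h
    rw [hD.dotProduct_mulVec_mul_mul_inv, ← hq] at this
    exact this.le
  calc _ ≤ μ {ω | δ ^ 2 * d ≤ q ω} := measure_mono hevent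
    _ ≤ ENNReal.ofReal ((∫ ω, q ω ∂μ) / (δ ^ 2 * d)) :=
      meas_ge_le_ofReal_integral_div (ae_of_all _ hq_nonneg)
        (integrable_dotProduct_mulVec_self hε2 _) (by positivity)
    _ = ENNReal.ofReal (1 / δ ^ 2) := by
      rw [hq_int]
      field_simp

/-- Consistency bound for the unpenalized estimator error `θ̂ − θ⁰ = D⁻¹UᵀV⁻¹ε`:
`P(‖θ̂ − θ⁰‖₂ > δ√(d/τ)) ≤ 1/δ²`, where `τ = λ_min(D H⁻¹ D)`. -/
theorem mdsp_lemma1_consistency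
    {Ω : Type*} [MeasurableSpace Ω] (μ : Measure Ω) [IsProbabilityMeasure μ]
    (M d : ℕ) [NeZero d] (ε : Ω → Fin M → ℝ)
    (Sig : Matrix (Fin M) (Fin M) ℝ) (hSig : Sig.PosDef)
    (hε1 : ∀ a : Fin M → ℝ, Integrable (fun ω => a ⬝ᵥ ε ω) μ)
    (hε2 : ∀ a b : Fin M → ℝ, Integrable (fun ω => (a ⬝ᵥ ε ω) * (b ⬝ᵥ ε ω)) μ)
    (hmean : ∀ a : Fin M → ℝ, ∫ ω, a ⬝ᵥ ε ω ∂μ = 0)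
    (hcov : ∀ a b : Fin M → ℝ, ∫ ω, (a ⬝ᵥ ε ω) * (b ⬝ᵥ ε ω) ∂μ = a ⬝ᵥ (Sig *ᵥ b))
    (U : Matrix (Fin M) (Fin d) ℝ) (hU : U.rank = d)
    (V : Matrix (Fin M) (Fin M) ℝ) (hV : V.PosDef)
    (hD : (Uᵀ * V⁻¹ * U).PosDef)
    (hH : (Uᵀ * V⁻¹ * Sig * V⁻¹ * U).PosDef)
    (hSym : ((Uᵀ * V⁻¹ * U) * (Uᵀ * V⁻¹ * Sig * V⁻¹ * U)⁻¹ * (Uᵀ * V⁻¹ * U)).IsHermitian)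
    (hτ : 0 < ⨅ i, hSym.eigenvalues i)
    (δ : ℝ) (hδ : 0 < δ) :
    μ {ω | δ * Real.sqrt ((d : ℝ) / (⨅ i, hSym.eigenvalues i)) <
        Real.sqrt (∑ k, (((Uᵀ * V⁻¹ * U)⁻¹ *ᵥ (Uᵀ *ᵥ (V⁻¹ *ᵥ ε ω))) k) ^ 2)} ≤
      ENNReal.ofReal (1 / δ ^ 2) :=
  mdsp_lemma1_consistency_general μ M d ε Sig hε2 hcov U V hV hD hH hSym hτ δ hδ
end

section
/- Let κ > 0, λ > 0, a ∈ ℝ, and let Γ ⊂ ℝ be a finite nonempty set. Define f(ν) = (κ/2)(ν − a)² + λ·min_{g ∈ Γ}|ν − g|. Then f attains its global minimum over ℝ, and every global minimizer of f belongs to the finite candidate set {g + S_{λ/κ}(a − g) : g ∈ Γ}, where S_c(t) = sign(t)·max(|t| − c, 0) is the soft-thresholding operator. Consequently min_{ν∈ℝ} f(ν) = min_{g∈Γ} f(g + S_{λ/κ}(a − g)). -/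
/-!
Write `f(ν) = min_{g ∈ Γ} f_g(ν)` with `f_g(ν) = (κ/2)(ν − a)² + λ|ν − g|`. The point
`p_g = g + S_{λ/κ}(a − g)` is the proximal point of `f_g`, and since `f_g` is `κ`-strongly convex,
`f_g(p_g) + (κ/2)(ν − p_g)² ≤ f_g(ν)`. Choosing `g` nearest to `ν` gives `f_g(ν) = f(ν)`, while
`f(p_g) ≤ f_g(p_g)` always, so `f(p_g) + (κ/2)(ν − p_g)² ≤ f(ν)`. Hence the best candidate is a global
minimizer, and a global minimizer `ν` must coincide with `p_g` for its nearest `g`.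
-/

/-- The soft-thresholding operator `S_c(t) = sign(t)·max(|t| − c, 0)`. -/
noncomputable def softThreshold (c t : ℝ) : ℝ := Real.sign t * max (|t| - c) 0

lemma softThreshold_of_abs_le {c t : ℝ} (h : |t| ≤ c) : softThreshold c t = 0 := by
  simp [softThreshold, max_eq_right (sub_nonpos.mpr h)]

lemma softThreshold_of_lt {c t : ℝ} (hc : 0 ≤ c) (h : c < t) : softThreshold c t = t - c := by
  have ht : 0 < t := hc.trans_lt h
  rw [softThreshold, Real.sign_of_pos ht, abs_of_pos ht, max_eq_left (by linarith), one_mul]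

lemma softThreshold_of_lt_neg {c t : ℝ} (hc : 0 ≤ c) (h : t < -c) :
    softThreshold c t = t + c := by
  have ht : t < 0 := h.trans_le (neg_nonpos.mpr hc)
  rw [softThreshold, Real.sign_of_neg ht, abs_of_neg ht, max_eq_left (by linarith)]
  ring

/-- `b - S_c(b)` is `c` times a subgradient of `|·|` at `S_c(b)`. -/
lemma sub_softThreshold_mul_sub_le {c : ℝ} (hc : 0 ≤ c) (b μ : ℝ) :
    (b - softThreshold c b) * (μ - softThreshold c b) ≤ c * (|μ| - |softThreshold c b|) := by
  rcases le_or_gt |b| c with hb | hb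
  · rw [softThreshold_of_abs_le hb, abs_zero, sub_zero, sub_zero, sub_zero]
    calc b * μ ≤ |b| * |μ| := by rw [← abs_mul]; exact le_abs_self _
      _ ≤ c * |μ| := by gcongr
  rcases lt_abs.mp hb with hpos | hneg
  · have ht : 0 < b - c := by linarith
    rw [softThreshold_of_lt hc hpos, abs_of_pos ht]
    linear_combination mul_le_mul_of_nonneg_left (le_abs_self μ) hc
  · have ht : b + c < 0 := by linarith
    rw [softThreshold_of_lt_neg hc (by linarith), abs_of_neg ht]
    linear_combination mul_le_mul_of_nonneg_left (neg_abs_le μ) hc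

lemma softThreshold_prox_le {c : ℝ} (hc : 0 ≤ c) (b μ : ℝ) :
    (softThreshold c b - b) ^ 2 + 2 * c * |softThreshold c b| + (μ - softThreshold c b) ^ 2 ≤
      (μ - b) ^ 2 + 2 * c * |μ| := by
  linear_combination 2 * sub_softThreshold_mul_sub_le hc b μ

section
variable (κ lam a : ℝ) (Γ : Finset ℝ) (hΓ : Γ.Nonempty)

noncomputable def proxCandidate (g : ℝ) : ℝ := g + softThreshold (lam / κ) (a - g)

noncomputable def proxObjective (ν : ℝ) : ℝ :=
  κ / 2 * (ν - a) ^ 2 + lam * Γ.inf' hΓ (fun g => |ν - g|)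

variable {κ lam}

lemma proxCandidate_prox_le (hκ : 0 < κ) (hlam : 0 ≤ lam) (g ν : ℝ) :
    κ / 2 * (proxCandidate κ lam a g - a) ^ 2 + lam * |proxCandidate κ lam a g - g| +
        κ / 2 * (ν - proxCandidate κ lam a g) ^ 2 ≤
      κ / 2 * (ν - a) ^ 2 + lam * |ν - g| := by
  have h := softThreshold_prox_le (div_nonneg hlam hκ.le) (a - g) (ν - g)
  have hscale : κ / 2 * (2 * (lam / κ)) = lam := by field_simp
  simp only [proxCandidate, add_sub_cancel_left]
  linear_combination (κ / 2) * h + (|ν - g| - |softThreshold (lam / κ) (a - g)|) * hscale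

lemma exists_proxObjective_proxCandidate_add_sq_le (hκ : 0 < κ) (hlam : 0 ≤ lam) (ν : ℝ) :
    ∃ g ∈ Γ, proxObjective κ lam a Γ hΓ (proxCandidate κ lam a g) +
        κ / 2 * (ν - proxCandidate κ lam a g) ^ 2 ≤ proxObjective κ lam a Γ hΓ ν := by
  obtain ⟨g, hg, hnear⟩ := Γ.exists_mem_eq_inf' hΓ (fun g => |ν - g|)
  refine ⟨g, hg, ?_⟩
  have hdist : Γ.inf' hΓ (fun g' => |proxCandidate κ lam a g - g'|) ≤
      |proxCandidate κ lam a g - g| := Γ.inf'_le _ hg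
  have := proxCandidate_prox_le a hκ hlam g ν
  unfold proxObjective
  rw [hnear]
  linarith [mul_le_mul_of_nonneg_left hdist hlam]

end

/-- For a finite nonempty set `Γ`, the function
`f(ν) = (κ/2)(ν − a)² + λ·min_{g∈Γ}|ν − g|` attains its global minimum, every global
minimizer lies in the candidate set `{g + S_{λ/κ}(a − g) : g ∈ Γ}`, and consequently
the global minimum equals `min_{g∈Γ} f(g + S_{λ/κ}(a − g))`. -/
theorem multi_directional_prox_candidates
    (κ lam a : ℝ) (hκ : 0 < κ) (hlam : 0 < lam)
    (Γ : Finset ℝ) (hΓ : Γ.Nonempty) :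
    (∃ ν₀ : ℝ, ∀ ν : ℝ,
      κ / 2 * (ν₀ - a) ^ 2 + lam * Γ.inf' hΓ (fun g => |ν₀ - g|) ≤
        κ / 2 * (ν - a) ^ 2 + lam * Γ.inf' hΓ (fun g => |ν - g|)) ∧
    (∀ ν₀ : ℝ,
      (∀ ν : ℝ,
        κ / 2 * (ν₀ - a) ^ 2 + lam * Γ.inf' hΓ (fun g => |ν₀ - g|) ≤
          κ / 2 * (ν - a) ^ 2 + lam * Γ.inf' hΓ (fun g => |ν - g|)) →
      ∃ g ∈ Γ, ν₀ = g + softThreshold (lam / κ) (a - g)) ∧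
    (∀ ν : ℝ,
      Γ.inf' hΓ (fun g =>
        κ / 2 * ((g + softThreshold (lam / κ) (a - g)) - a) ^ 2 +
          lam * Γ.inf' hΓ (fun g' => |(g + softThreshold (lam / κ) (a - g)) - g'|)) ≤
        κ / 2 * (ν - a) ^ 2 + lam * Γ.inf' hΓ (fun g => |ν - g|)) := by
  set f := proxObjective κ lam a Γ hΓ
  set p := proxCandidate κ lam a
  have growth : ∀ ν, ∃ g ∈ Γ, f (p g) + κ / 2 * (ν - p g) ^ 2 ≤ f ν :=
    exists_proxObjective_proxCandidate_add_sq_le a Γ hΓ hκ hlam.le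
  have candidate_le : ∀ ν, Γ.inf' hΓ (fun g => f (p g)) ≤ f ν := fun ν => by
    obtain ⟨g, hg, hle⟩ := growth ν
    linarith [Γ.inf'_le (fun g => f (p g)) hg, mul_nonneg (half_pos hκ).le (sq_nonneg (ν - p g))]
  refine ⟨?_, fun ν₀ (hmin : ∀ ν, f ν₀ ≤ f ν) => ?_, candidate_le⟩
  · obtain ⟨g, -, hg⟩ := Γ.exists_mem_eq_inf' hΓ (fun g => f (p g))
    exact ⟨p g, fun ν => hg.symm.trans_le (candidate_le ν)⟩
  · obtain ⟨g, hg, hle⟩ := growth ν₀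
    have hsq : κ / 2 * (ν₀ - p g) ^ 2 ≤ 0 := by linarith [hmin (p g)]
    exact ⟨g, hg, sub_eq_zero.mp <| (sq_nonpos_iff _).mp <|
      nonpos_of_mul_nonpos_right hsq (half_pos hκ)⟩
end

section
/- Let κ > 0, λ > 0, γ ∈ ℝ with |γ| ≥ 2λ/κ, and a ∈ ℝ. Define f(ν) = (κ/2)(ν − a)² + λ·min(|ν|, |ν − γ|). Then: (i) if |a − γ| ≤ λ/κ, the point ν = γ is a global minimizer of f over ℝ; and (ii) if |a| ≤ λ/κ, the point ν = 0 is a global minimizer of f over ℝ. -/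
lemma mdsp_aux (κ lam γ c u : ℝ) (hκ : 0 < κ) (hlam : 0 < lam)
    (hγ : 2 * lam ≤ κ * |γ|) (hc : κ * |c| ≤ lam) :
    κ / 2 * c ^ 2 ≤ κ / 2 * (u + c) ^ 2 + lam * min |u| |u - γ| := by
  have htri : |γ| ≤ |u| + |u - γ| := by
    have h := abs_add_le u (γ - u)
    have : u + (γ - u) = γ := by ring
    rw [this] at h
    calc |γ| ≤ |u| + |γ - u| := h
      _ = |u| + |u - γ| := by rw [abs_sub_comm]
  have hcu : -(|c| * |u|) ≤ c * u := by
    have := neg_abs_le (c * u)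
    rw [abs_mul] at this; linarith
  rcases le_total |u| |u - γ| with h | h
  · rw [min_eq_left h]
    nlinarith [abs_nonneg u, sq_nonneg u, mul_nonneg (sub_nonneg.2 hc) (abs_nonneg u)]
  · rw [min_eq_right h]
    nlinarith [sq_nonneg (κ * |u| - 2 * lam), abs_nonneg u, abs_nonneg (u - γ),
      sq_abs u,
      mul_le_mul_of_nonneg_right hc (mul_nonneg hκ.le (abs_nonneg u)),
      mul_le_mul_of_nonneg_left hcu (mul_nonneg hκ.le hκ.le),
      mul_le_mul_of_nonneg_left htri (mul_nonneg hκ.le hlam.le),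
      mul_le_mul_of_nonneg_left hγ hlam.le]

/-- MDSP proximal operator with well-separated directions `0` and `γ`
(`|γ| ≥ 2λ/κ`): for `f(ν) = (κ/2)(ν − a)² + λ·min(|ν|, |ν − γ|)`,
(i) if `|a − γ| ≤ λ/κ` then `γ` is a global minimizer of `f`;
(ii) if `|a| ≤ λ/κ` then `0` is a global minimizer of `f`. -/
theorem mdsp_prox_exact_recovery
    (κ lam γ a : ℝ) (hκ : 0 < κ) (hlam : 0 < lam)
    (hγ : 2 * lam / κ ≤ |γ|) :
    (|a - γ| ≤ lam / κ →
      ∀ ν : ℝ, κ / 2 * (γ - a) ^ 2 + lam * min |γ| |γ - γ| ≤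
        κ / 2 * (ν - a) ^ 2 + lam * min |ν| |ν - γ|) ∧
    (|a| ≤ lam / κ →
      ∀ ν : ℝ, κ / 2 * ((0 : ℝ) - a) ^ 2 + lam * min |(0 : ℝ)| |(0 : ℝ) - γ| ≤
        κ / 2 * (ν - a) ^ 2 + lam * min |ν| |ν - γ|) := by
  have hγ' : 2 * lam ≤ κ * |γ| := by
    rw [div_le_iff₀ hκ] at hγ; linarith
  constructor
  · intro ha ν
    have hc : κ * |γ - a| ≤ lam := by
      rw [le_div_iff₀ hκ, abs_sub_comm] at ha; linarith
    have hγneg : 2 * lam ≤ κ * |-γ| := by rw [abs_neg]; exact hγ'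
    have key := mdsp_aux κ lam (-γ) (γ - a) (ν - γ) hκ hlam hγneg hc
    have h1 : ν - γ + (γ - a) = ν - a := by ring
    have h2 : ν - γ - -γ = ν := by ring
    rw [h1, h2] at key
    simpa [sub_self, abs_zero, min_comm] using key
  · intro ha ν
    have hc : κ * |-a| ≤ lam := by
      rw [le_div_iff₀ hκ] at ha; rw [abs_neg]; linarith
    have key := mdsp_aux κ lam γ (-a) ν hκ hlam hγ' hc
    have h1 : ν + -a = ν - a := by ring
    rw [h1] at key
    simpa [neg_sq] using key
end
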